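/- arXiv:1612.06054 — 3 statements merged into one kernel-verified Lean document; each statement's English description precedes it below -/
import Mathlib

section
/- Let L be a first-order language with only function symbols and let K be a class of metric L-algebras (in a fixed universe) that is closed under isometric L-isomorphisms, under M-products (for every family (A_i)_{i∈I} of members of K, the product Π_i A_i with pointwise operations and the sup extended metric d((a_i)_i,(b_i)_i) = sup_i d(a_i, b_i) belongs to K), and under M-subalgebras (every L-substructure of a member of K, with the induced metric, belongs to K). Then for every set X there exist a metric L-algebra F_K(X) in K and a surjective L-homomorphism F : Term_L(X) → F_K(X) from the term algebra over X such that for every A in K and every L-homomorphism f : Term_L(X) → A there exists a unique non-expansive L-homomorphism h : F_K(X) → A with h ∘ F = f. -/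
/-!
Every homomorphism `f` from the term algebra into a member of `K` induces the extended
pseudometric `(s, t) ↦ d(f s, f t)` on terms. These pseudometrics form a set; choosing for each
of them one member of `K` and one homomorphism inducing it, the M-product of the chosen algebras
lies in `K`, and so does the image of the term algebra in it, which is the free algebra. Its
distance is the supremum of all induced pseudometrics, so every `f` is constant on the fibres of
the quotient map and factors through it non-expansively; uniqueness holds because the quotient
map is surjective.
-/

open FirstOrder FirstOrder.Language
open scoped ENNReal

universe u v w x y z

noncomputable section

namespace MetricAlgebraPaper

/-- The sup extended metric on a product of extended metric spaces. -/
def supEMetric {I : Type*} (A : I → Type*) [∀ i, EMetricSpace (A i)] :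
    EMetricSpace (∀ i, A i) where
  edist f g := ⨆ i, edist (f i) (g i)
  edist_self f := by simp
  edist_comm f g := by simp [edist_comm]
  edist_triangle f g h :=
    iSup_le fun i => (edist_triangle (f i) (g i) (h i)).trans
      (add_le_add (le_iSup (fun j => edist (f j) (g j)) i)
        (le_iSup (fun j => edist (g j) (h j)) i))
  eq_of_edist_eq_zero := by
    intro f g hfg
    funext i
    exact eq_of_edist_eq_zero
      (le_antisymm (le_trans (le_iSup (fun j => edist (f j) (g j)) i) hfg.le) (zero_le))

/-- The pointwise `L`-structure on a product. -/
def piStr (L : FirstOrder.Language.{u, v}) {I : Type*} (A : I → Type*)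
    [∀ i, L.Structure (A i)] : L.Structure (∀ i, A i) where
  funMap f a := fun i => Structure.funMap f fun j => a j i
  RelMap r a := ∀ i, Structure.RelMap r fun j => a j i

/-- The term algebra structure on the set of `L`-terms over `X`. -/
instance termStructure (L : FirstOrder.Language.{u, v}) (X : Type w) :
    L.Structure (L.Term X) where
  funMap f ts := Term.func f ts
  RelMap _ _ := False

/-- A map between extended metric spaces is non-expansive if it does not increase distances. -/
def NonExpansive {α : Type*} {β : Type*} [EMetricSpace α] [EMetricSpace β] (f : α → β) : Prop :=
  ∀ a b : α, edist (f a) (f b) ≤ edist a b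

/-- A metric `L`-algebra: a type equipped with an extended metric and an `L`-structure. -/
structure MetricAlg (L : FirstOrder.Language.{u, v}) where
  carrier : Type u
  [emetric : EMetricSpace carrier]
  [str : L.Structure carrier]

attribute [instance] MetricAlg.emetric MetricAlg.str

instance {L : FirstOrder.Language.{u, v}} : CoeSort (MetricAlg L) (Type u) :=
  ⟨MetricAlg.carrier⟩

variable {L : FirstOrder.Language.{u, v}}

/-- Satisfaction of the M-equation `X ⊢ s =_ε t` in a metric `L`-algebra. -/
def Sat (A : MetricAlg L) {X : Type w} (s t : L.Term X) (ε : ℝ≥0∞) : Prop :=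
  ∀ v : X → A, edist (s.realize v) (t.realize v) ≤ ε

/-- A metric `L`-algebra is quantitative if all its operations are non-expansive
for the sup metric on finite powers. -/
def IsQuantitative (A : MetricAlg L) : Prop :=
  ∀ (n : ℕ) (f : L.Functions n) (a b : Fin n → A),
    edist (Structure.funMap f a) (Structure.funMap f b) ≤ ⨆ i, edist (a i) (b i)

/-- The M-product of a family of metric `L`-algebras: the product of the underlying
`L`-structures equipped with the sup extended metric. -/
def MProd {I : Type u} (A : I → MetricAlg L) : MetricAlg L where
  carrier := ∀ i, (A i).carrier
  emetric := supEMetric fun i => (A i).carrier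
  str := piStr L fun i => (A i).carrier

/-- An M-subalgebra of a metric `L`-algebra: an `L`-substructure with the induced metric. -/
def MSub (A : MetricAlg L) (S : L.Substructure A.carrier) : MetricAlg L where
  carrier := S
  emetric := inferInstance
  str := inferInstance

/-- Closure of a class under isometric `L`-isomorphisms. -/
def ClosedUnderIso (K : MetricAlg L → Prop) : Prop :=
  ∀ A B : MetricAlg L, K A → ∀ φ : A ≃[L] B, Isometry ⇑φ → K B

/-- Closure of a class under M-products (with the sup extended metric). -/
def ClosedUnderProd (K : MetricAlg L → Prop) : Prop :=
  ∀ (I : Type u) (A : I → MetricAlg L), (∀ i, K (A i)) → K (MProd A)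

/-- Closure of a class under M-subalgebras (with the induced metric). -/
def ClosedUnderSub (K : MetricAlg L → Prop) : Prop :=
  ∀ A : MetricAlg L, K A → ∀ S : L.Substructure A.carrier, K (MSub A S)

/-- Closure of a class under M-quotients (surjective non-expansive homomorphic images). -/
def ClosedUnderQuot (K : MetricAlg L → Prop) : Prop :=
  ∀ A B : MetricAlg L, K A → ∀ π : A →[L] B, Function.Surjective ⇑π → NonExpansive ⇑π → K B

section Homomorphisms

variable {M N P : Type*} [L.Structure M] [L.Structure N] [L.Structure P]

def rangeRestrict (F : M →[L] N) : M →[L] F.range :=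
  Hom.codRestrict F.range F F.mem_range_self

theorem rangeRestrict_surjective (F : M →[L] N) : Function.Surjective (rangeRestrict F) := by
  rintro ⟨_, t, rfl⟩
  exact ⟨t, rfl⟩

def liftOfSurjective [L.IsAlgebraic] (F : M →[L] N) (hF : Function.Surjective F) (f : M →[L] P)
    (hf : ∀ a b, F a = F b → f a = f b) : N →[L] P where
  toFun := f ∘ Function.surjInv hF
  map_fun' {n} g xs := by
    have hrep : F (Function.surjInv hF (Structure.funMap g xs)) =
        F (Structure.funMap g (Function.surjInv hF ∘ xs)) := by
      rw [Function.surjInv_eq hF, F.map_fun, ← Function.comp_assoc,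
        Function.comp_surjInv, Function.id_comp]
    simp only [Function.comp_apply, hf _ _ hrep, f.map_fun, Function.comp_assoc]
  map_rel' r := isEmptyElim r

@[simp]
theorem liftOfSurjective_apply [L.IsAlgebraic] (F : M →[L] N) (hF : Function.Surjective F)
    (f : M →[L] P) (hf : ∀ a b, F a = F b → f a = f b) (a : M) :
    liftOfSurjective F hF f hf (F a) = f a :=
  hf _ _ (Function.surjInv_eq hF (F a))

def MProd.lift {I : Type u} {A : I → MetricAlg L} (fs : ∀ i, M →[L] A i) : M →[L] MProd A where
  toFun a i := fs i a
  map_fun' g xs := funext fun i => (fs i).map_fun g xs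
  map_rel' r xs h i := (fs i).map_rel r xs h

end Homomorphisms

theorem NonExpansive.of_comp_surjective {α β γ : Type*} [EMetricSpace β]
    [EMetricSpace γ] {F : α → β} (hF : Function.Surjective F) {h : β → γ}
    (hle : ∀ a b, edist (h (F a)) (h (F b)) ≤ edist (F a) (F b)) : NonExpansive h := by
  intro x y
  obtain ⟨a, rfl⟩ := hF x
  obtain ⟨b, rfl⟩ := hF y
  exact hle a b

section FreeAlgebra

variable (K : MetricAlg L → Prop) (X : Type u)

def pullbackEDist {A : MetricAlg L} (f : L.Term X →[L] A) (s t : L.Term X) : ℝ≥0∞ :=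
  edist (f s) (f t)

/-- Unlike the class of homomorphisms into members of `K`, the set of pseudometrics they induce
on terms is small, so it can index an M-product. -/
def termEDists : Set (L.Term X → L.Term X → ℝ≥0∞) :=
  {d | ∃ p : Σ A : MetricAlg L, L.Term X →[L] A, K p.1 ∧ pullbackEDist X p.2 = d}

def edistWitness (d : termEDists K X) : Σ A : MetricAlg L, L.Term X →[L] A :=
  d.2.choose

theorem edistWitness_mem (d : termEDists K X) : K (edistWitness K X d).1 :=
  d.2.choose_spec.1

theorem pullbackEDist_edistWitness (d : termEDists K X) :
    pullbackEDist X (edistWitness K X d).2 = d :=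
  d.2.choose_spec.2

def freeProd : MetricAlg L :=
  MProd fun d : termEDists K X => (edistWitness K X d).1

def toFreeProd : L.Term X →[L] freeProd K X :=
  MProd.lift fun d => (edistWitness K X d).2

def freeAlg : MetricAlg L :=
  MSub (freeProd K X) (toFreeProd K X).range

def toFreeAlg : L.Term X →[L] freeAlg K X :=
  rangeRestrict (toFreeProd K X)

variable {K X}

theorem toFreeAlg_surjective : Function.Surjective (toFreeAlg K X) :=
  rangeRestrict_surjective _

theorem freeAlg_mem (hProd : ClosedUnderProd K) (hSub : ClosedUnderSub K) : K (freeAlg K X) :=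
  hSub _ (hProd _ _ fun d => edistWitness_mem K X d) _

theorem edist_le_edist_toFreeAlg {A : MetricAlg L} (hA : K A) (f : L.Term X →[L] A)
    (s t : L.Term X) : edist (f s) (f t) ≤ edist (toFreeAlg K X s) (toFreeAlg K X t) := by
  let d : termEDists K X := ⟨pullbackEDist X f, ⟨A, f⟩, hA, rfl⟩
  calc edist (f s) (f t) = pullbackEDist X (edistWitness K X d).2 s t := by
        rw [pullbackEDist_edistWitness]; rfl
    _ ≤ edist (toFreeAlg K X s) (toFreeAlg K X t) :=
        le_iSup (fun e => pullbackEDist X (edistWitness K X e).2 s t) d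

theorem eq_of_toFreeAlg_eq {A : MetricAlg L} (hA : K A) (f : L.Term X →[L] A) (s t : L.Term X)
    (hst : toFreeAlg K X s = toFreeAlg K X t) : f s = f t :=
  eq_of_edist_eq_zero <| nonpos_iff_eq_zero.mp <|
    (edist_le_edist_toFreeAlg hA f s t).trans_eq (hst ▸ edist_self _)

end FreeAlgebra

theorem exists_free_algebra_general (L : FirstOrder.Language.{u, v}) [L.IsAlgebraic]
    (K : MetricAlg L → Prop)
    (hProd : ClosedUnderProd K) (hSub : ClosedUnderSub K)
    (X : Type u) :
    ∃ (FA : MetricAlg L) (F : L.Term X →[L] FA),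
      K FA ∧ Function.Surjective ⇑F ∧
        ∀ A : MetricAlg L, K A → ∀ f : L.Term X →[L] A,
          ∃! h : FA →[L] A, NonExpansive ⇑h ∧ ⇑h ∘ ⇑F = ⇑f := by
  have hF := toFreeAlg_surjective (K := K) (X := X)
  refine ⟨freeAlg K X, toFreeAlg K X, freeAlg_mem hProd hSub, hF, fun A hA f => ?_⟩
  have hker := eq_of_toFreeAlg_eq hA f
  have hcomp : ⇑(liftOfSurjective _ hF f hker) ∘ toFreeAlg K X = f :=
    funext (liftOfSurjective_apply _ hF f hker)
  refine ⟨liftOfSurjective _ hF f hker, ⟨?_, hcomp⟩, fun h ⟨_, hh⟩ => ?_⟩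
  · refine NonExpansive.of_comp_surjective hF fun s t => ?_
    simpa only [liftOfSurjective_apply] using edist_le_edist_toFreeAlg hA f s t
  · exact DFunLike.coe_injective (hF.injective_comp_right (hh.trans hcomp.symm))

/-- If a class `K` of metric `L`-algebras is closed under isometric
isomorphisms, M-products and M-subalgebras, then for every set `X` there is a
`K`-free algebra over `X`: a member `FA` of `K` together with a surjective homomorphism
`F` from the term algebra over `X` such that every homomorphism from the term algebra
to a member of `K` factors uniquely through `F` via a non-expansive homomorphism. -/
theorem exists_free_algebra (L : FirstOrder.Language.{u, v}) [L.IsAlgebraic]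
    (K : MetricAlg L → Prop)
    (hIso : ClosedUnderIso K) (hProd : ClosedUnderProd K) (hSub : ClosedUnderSub K)
    (X : Type u) :
    ∃ (FA : MetricAlg L) (F : L.Term X →[L] FA),
      K FA ∧ Function.Surjective ⇑F ∧
        ∀ A : MetricAlg L, K A → ∀ f : L.Term X →[L] A,
          ∃! h : FA →[L] A, NonExpansive ⇑h ∧ ⇑h ∘ ⇑F = ⇑f :=
  exists_free_algebra_general L K hProd hSub X

end MetricAlgebraPaper
end
end

section
/- Let L be a first-order language with only function symbols and let K be a class of metric L-algebras closed under isometric L-isomorphisms. Then K is a variety (i.e., there exists a set I of M-equations, each over a finite variable set, such that K is exactly the class of metric L-algebras satisfying every M-equation in I) if and only if K is closed under M-products (products with pointwise operations and the sup extended metric), M-subalgebras (L-substructures with the induced metric), and M-quotients (images of surjective non-expansive L-homomorphisms). -/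
open FirstOrder FirstOrder.Language
open scoped ENNReal

universe u v w x y z

noncomputable section

namespace MetricAlgebraPaper

variable {L : FirstOrder.Language.{u, v}}

/-! Write `d_K(s, t)` for the supremum of the distances between terms `s` and `t` under all
valuations in members of `K`. Given `A` satisfying every finitary equation valid in `K`, evaluate
the terms over `A` in a product of members of `K` chosen to realise `d_K` exactly. Evaluation in
`A` itself is non-expansive for `d_K`, since a pair of terms involves only finitely many
variables; so it factors through the image of the terms in the product, a subalgebra, as a
surjective non-expansive homomorphism onto `A`. Conversely, M-equations are preserved by
products, subalgebras and quotients. -/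

section Terms

variable {X : Type*} {Y : Type*}

lemma Term.relabel_restrictVar [DecidableEq X] (t : L.Term X) {f : t.varFinset → Y}
    {g : Y → X} (hgf : ∀ x, g (f x) = x) : (t.restrictVar f).relabel g = t := by
  induction t with
  | var x => exact congrArg Term.var (hgf _)
  | func F ts ih => exact congrArg (Term.func F) (funext fun i => ih i fun x => hgf _)

lemma Term.exists_relabel_fin (s t : L.Term X) :
    ∃ (n : ℕ) (ρ : Fin n → X) (s₀ t₀ : L.Term (Fin n)),
      Function.Injective ρ ∧ s₀.relabel ρ = s ∧ t₀.relabel ρ = t := by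
  classical
  let F := s.varFinset ∪ t.varFinset
  let ρ : Fin F.card → X := fun i => F.equivFin.symm i
  have hρ : ∀ (x : X) (hx : x ∈ F), ρ (F.equivFin ⟨x, hx⟩) = x := by simp [ρ]
  refine ⟨F.card, ρ,
    s.restrictVar fun x => F.equivFin ⟨x, Finset.mem_union_left _ x.2⟩,
    t.restrictVar fun x => F.equivFin ⟨x, Finset.mem_union_right _ x.2⟩,
    fun i j hij => F.equivFin.symm.injective (Subtype.ext hij),
    Term.relabel_restrictVar s fun _ => hρ _ _, Term.relabel_restrictVar t fun _ => hρ _ _⟩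

def Term.realizeHom {M : Type*} [L.Structure M] (v : X → M) : L.Term X →[L] M where
  toFun t := t.realize v
  map_fun' _ _ := rfl
  map_rel' _ _ h := h.elim

end Terms

section Preservation

variable {X : Type w} {s t : L.Term X} {ε : ℝ≥0∞}

lemma realize_MProd {I : Type u} (A : I → MetricAlg L) (v : X → MProd A) (i : I) :
    t.realize v i = t.realize fun x => v x i := by
  induction t with
  | var => rfl
  | func f ts ih => exact congrArg (Structure.funMap (M := (A i).carrier) f) (funext ih)

lemma Sat.mProd {I : Type u} {A : I → MetricAlg L} (h : ∀ i, Sat (A i) s t ε) :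
    Sat (MProd A) s t ε := fun v =>
  iSup_le fun i => by
    rw [realize_MProd, realize_MProd]
    exact h i _

lemma Sat.mSub {A : MetricAlg L} (h : Sat A s t ε) (S : L.Substructure A.carrier) :
    Sat (MSub A S) s t ε := fun v => by
  have hS : ∀ u : L.Term X, ((u.realize v : S) : A.carrier) = u.realize (Subtype.val ∘ v) :=
    fun u => (HomClass.realize_term S.subtype).symm
  exact (Subtype.edist_eq _ _).trans_le (hS s ▸ hS t ▸ h _)

lemma Sat.of_surjective {A B : MetricAlg L} (h : Sat A s t ε) (π : A →[L] B)
    (hπ : Function.Surjective π) (hne : NonExpansive π) : Sat B s t ε := fun v => by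
  have hv : π ∘ (Function.surjInv hπ ∘ v) = v := funext fun x => Function.surjInv_eq hπ (v x)
  rw [← hv, HomClass.realize_term, HomClass.realize_term]
  exact (hne _ _).trans (h _)

lemma Sat.of_relabel {Y : Type*} {A : MetricAlg L} {ρ : X → Y} (hρ : Function.Injective ρ)
    (h : Sat A (s.relabel ρ) (t.relabel ρ) ε) : Sat A s t ε := fun w => by
  -- `s.realize w` merely supplies a default value outside the range of `ρ`.
  have := h (Function.extend ρ w fun _ => s.realize w)
  rwa [Term.realize_relabel, Term.realize_relabel, Function.extend_comp hρ] at this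

end Preservation

section RangeLift

variable [L.IsAlgebraic] {M N P : Type*} [L.Structure M] [L.Structure N] [L.Structure P]

def rangeLift (g : M →[L] N) (f : M →[L] P) (hfg : ∀ x y, g x = g y → f x = f y) :
    g.range →[L] P where
  toFun y := f (Hom.mem_range.1 y.2).choose
  map_fun' {n} F ys := by
    have key : ∀ (y : g.range) (x : M), g x = y → f (Hom.mem_range.1 y.2).choose = f x :=
      fun y x hx => hfg _ _ ((Hom.mem_range.1 y.2).choose_spec.trans hx.symm)
    refine (key _ (Structure.funMap F fun i => (Hom.mem_range.1 (ys i).2).choose) ?_).trans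
      (f.map_fun F _)
    rw [g.map_fun]
    exact congrArg (Structure.funMap F) (funext fun i => (Hom.mem_range.1 (ys i).2).choose_spec)
  map_rel' r := isEmptyElim r

lemma rangeLift_apply (g : M →[L] N) (f : M →[L] P) (hfg : ∀ x y, g x = g y → f x = f y)
    (x : M) : rangeLift g f hfg ⟨g x, Hom.mem_range_self g x⟩ = f x :=
  hfg _ _ (Hom.mem_range.1 (Hom.mem_range_self g x)).choose_spec

lemma rangeLift_surjective (g : M →[L] N) {f : M →[L] P} (hfg : ∀ x y, g x = g y → f x = f y)
    (hf : Function.Surjective f) : Function.Surjective (rangeLift g f hfg) := fun p => by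
  obtain ⟨x, rfl⟩ := hf p
  exact ⟨_, rangeLift_apply g f hfg x⟩

lemma rangeLift_nonExpansive [EMetricSpace N] [EMetricSpace P] (g : M →[L] N) (f : M →[L] P)
    (hfg : ∀ x y, g x = g y → f x = f y) (hd : ∀ x y, edist (f x) (f y) ≤ edist (g x) (g y)) :
    NonExpansive (rangeLift g f hfg) := by
  rintro ⟨_, x, rfl⟩ ⟨_, y, rfl⟩
  rw [rangeLift_apply, rangeLift_apply, Subtype.edist_eq]
  exact hd x y

end RangeLift

section TermDist

variable (K : MetricAlg L → Prop) {X : Type w}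

/-- The `K`-distance of two terms: the least `ε` such that `X ⊢ s =_ε t` holds throughout `K`. -/
def termDist (s t : L.Term X) : ℝ≥0∞ :=
  ⨆ (B : MetricAlg L) (_ : K B) (v : X → B), edist (s.realize v) (t.realize v)

variable {K}

lemma sat_termDist {B : MetricAlg L} (hB : K B) (s t : L.Term X) : Sat B s t (termDist K s t) :=
  fun v => le_iSup₂_of_le B hB (le_iSup (fun v => edist (s.realize v) (t.realize v)) v)

lemma sat_termDist_of_forall_fin {A : MetricAlg L}
    (hA : ∀ (n : ℕ) (s t : L.Term (Fin n)) (ε : ℝ≥0∞), (∀ B, K B → Sat B s t ε) → Sat A s t ε)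
    (s t : L.Term X) : Sat A s t (termDist K s t) := by
  obtain ⟨n, ρ, s₀, t₀, hρ, rfl, rfl⟩ := Term.exists_relabel_fin s t
  intro v
  have := hA n s₀ t₀ _ (fun B hB => (sat_termDist hB _ _).of_relabel hρ) (v ∘ ρ)
  rwa [← Term.realize_relabel, ← Term.realize_relabel] at this

end TermDist

/-- Index by the triples `(s, t, ε)` with `ε < termDist K s t`, each with a witness of this
strict inequality. -/
lemma exists_family_iSup_eq_termDist (K : MetricAlg L → Prop) (X : Type u) :
    ∃ (J : Type u) (B : J → MetricAlg L) (w : ∀ j, X → B j), (∀ j, K (B j)) ∧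
      ∀ s t : L.Term X, ⨆ j, edist (s.realize (w j)) (t.realize (w j)) = termDist K s t := by
  let J := {p : L.Term X × L.Term X × ℝ≥0∞ // p.2.2 < termDist K p.1 p.2.1}
  have hwit (j : J) : ∃ B : MetricAlg L, K B ∧ ∃ w : X → B,
      j.1.2.2 < edist (j.1.1.realize w) (j.1.2.1.realize w) := by
    simpa only [termDist, lt_iSup_iff, exists_prop] using j.2
  choose B hB w hw using hwit
  refine ⟨J, B, w, hB, fun s t => le_antisymm (iSup_le fun j => sat_termDist (hB j) s t _) ?_⟩
  exact le_of_forall_lt fun c hc => (hw ⟨(s, t, c), hc⟩).trans_le (le_iSup_of_le _ le_rfl)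

theorem mem_of_forall_sat [L.IsAlgebraic] {K : MetricAlg L → Prop} (hP : ClosedUnderProd K)
    (hS : ClosedUnderSub K) (hQ : ClosedUnderQuot K) (A : MetricAlg L)
    (hA : ∀ (n : ℕ) (s t : L.Term (Fin n)) (ε : ℝ≥0∞), (∀ B, K B → Sat B s t ε) → Sat A s t ε) :
    K A := by
  obtain ⟨J, B, w, hB, hw⟩ := exists_family_iSup_eq_termDist K A.carrier
  let H : L.Term A →[L] MProd B := Term.realizeHom fun a j => w j a
  let e : L.Term A →[L] A := Term.realizeHom id
  have hH : ∀ s t, edist (H s) (H t) = termDist K s t := fun s t => by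
    have hHj : ∀ u j, H u j = u.realize (w j) := fun u j => realize_MProd B _ j
    show ⨆ j, edist (H s j) (H t j) = _
    simp only [hHj, hw]
  have he : ∀ s t, edist (e s) (e t) ≤ edist (H s) (H t) := fun s t =>
    (hH s t).symm ▸ sat_termDist_of_forall_fin hA s t id
  have hker : ∀ s t, H s = H t → e s = e t := fun s t hst =>
    edist_le_zero.1 ((he s t).trans (by rw [hst, edist_self]))
  exact hQ (MSub (MProd B) H.range) A (hS _ (hP J B hB) _) (rangeLift H e hker)
    (rangeLift_surjective H hker fun a => ⟨Term.var a, rfl⟩) (rangeLift_nonExpansive H e hker he)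

theorem variety_iff_closed_hsp_general (L : FirstOrder.Language.{u, v}) [L.IsAlgebraic]
    (K : MetricAlg L → Prop) :
    (∃ I : Set (Σ n : ℕ, L.Term (Fin n) × L.Term (Fin n) × ℝ≥0∞),
        ∀ A : MetricAlg L, K A ↔ ∀ e ∈ I, Sat A e.2.1 e.2.2.1 e.2.2.2) ↔
      (ClosedUnderProd K ∧ ClosedUnderSub K ∧ ClosedUnderQuot K) := by
  constructor
  · rintro ⟨I, hI⟩
    simp only [ClosedUnderProd, ClosedUnderSub, ClosedUnderQuot, hI]
    exact ⟨fun J A hA e he => Sat.mProd fun i => hA i e he,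
      fun A hA S e he => (hA e he).mSub S,
      fun A B hA π hπ hne e he => (hA e he).of_surjective π hπ hne⟩
  · rintro ⟨hP, hS, hQ⟩
    refine ⟨{e | ∀ B, K B → Sat B e.2.1 e.2.2.1 e.2.2.2}, fun A => ⟨fun hA e he => he A hA, ?_⟩⟩
    exact fun hsat => mem_of_forall_sat hP hS hQ A fun n s t ε h => hsat ⟨n, s, t, ε⟩ h

/-- **variety theorem / metric HSP theorem.** A class `K` of metric
`L`-algebras closed under isometric isomorphisms is a variety (defined by a set of
M-equations, each over a finite variable set) iff it is closed under M-products,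
M-subalgebras and M-quotients. -/
theorem variety_iff_closed_hsp (L : FirstOrder.Language.{u, v}) [L.IsAlgebraic]
    (K : MetricAlg L → Prop) (hIso : ClosedUnderIso K) :
    (∃ I : Set (Σ n : ℕ, L.Term (Fin n) × L.Term (Fin n) × ℝ≥0∞),
        ∀ A : MetricAlg L, K A ↔ ∀ e ∈ I, Sat A e.2.1 e.2.2.1 e.2.2.2) ↔
      (ClosedUnderProd K ∧ ClosedUnderSub K ∧ ClosedUnderQuot K) :=
  variety_iff_closed_hsp_general L K

end MetricAlgebraPaper
end
end

section
/- There exist a normed real vector space V, a real vector space W equipped with a metric d, and a surjective ℝ-linear map f : V → W that is non-expansive (d(f(u), f(v)) ≤ ‖u − v‖ for all u, v ∈ V), such that the metric d on W is not induced by any norm on W. Concretely, one may take V = ℝ with its usual absolute-value norm, W = ℝ with its usual vector space structure and the metric d(x, y) = |tanh(x) − tanh(y)|, and f the identity map. Consequently, the class of normed real vector spaces, regarded as metric algebras, is not closed under M-quotients. -/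
/-! The identity `(ℝ, |·|) → (ℝ, d)` with `d x y = |tanh x - tanh y|` is non-expansive because
`tanh` is `1`-Lipschitz (its derivative is `1 / cosh² ≤ 1`). A norm inducing `d` would have to be
`x ↦ |tanh x|`, which is bounded by `1`, whereas an absolutely homogeneous function that is
positive somewhere is unbounded above. -/

open Set

theorem nonpos_of_bddAbove_of_abs_smul {E : Type*} [AddCommGroup E] [Module ℝ E] {n : E → ℝ}
    (hsmul : ∀ (a : ℝ) (x : E), n (a • x) = |a| * n x) (hbdd : BddAbove (range n)) (x : E) :
    n x ≤ 0 := by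
  by_contra! hx
  obtain ⟨C, hC⟩ := hbdd
  set a := (|C| + 1) / n x
  have ha : |a| * n x = |C| + 1 := by
    rw [abs_of_pos (by positivity), div_mul_cancel₀ _ hx.ne']
  have : n (a • x) ≤ C := hC (mem_range_self _)
  rw [hsmul, ha] at this
  linarith [le_abs_self C]

namespace Real

theorem hasDerivAt_tanh (x : ℝ) : HasDerivAt tanh (1 / cosh x ^ 2) x := by
  have h := (hasDerivAt_sinh x).div (hasDerivAt_cosh x) (cosh_pos x).ne'
  rw [← sq, ← sq, cosh_sq_sub_sinh_sq] at h
  rwa [show tanh = sinh / cosh from funext fun y => tanh_eq_sinh_div_cosh y]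

theorem lipschitzWith_one_tanh : LipschitzWith 1 tanh := by
  refine lipschitzWith_of_nnnorm_deriv_le (fun x => (hasDerivAt_tanh x).differentiableAt) fun x => ?_
  rw [(hasDerivAt_tanh x).deriv, ← NNReal.coe_le_coe, coe_nnnorm, norm_eq_abs, NNReal.coe_one,
    abs_of_pos (by positivity), div_le_one (by positivity)]
  nlinarith [one_le_cosh x]

end Real

/-- There are a normed real vector space (here `ℝ` with the
absolute-value norm), a real vector space `ℝ` equipped with a metric
`d(x, y) = |tanh x − tanh y|`, and a surjective `ℝ`-linear non-expansive map between
them (the identity), such that the metric on the codomain is not induced by any norm.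
Hence the class of normed real vector spaces is not closed under M-quotients. -/
theorem normed_spaces_not_closed_under_mQuotients :
    ∃ (f : ℝ →ₗ[ℝ] ℝ) (d : ℝ → ℝ → ℝ),
      (∀ x y : ℝ, d x y = |Real.tanh x - Real.tanh y|) ∧
      (∀ x y : ℝ, d x y = 0 ↔ x = y) ∧
      (∀ x y : ℝ, d x y = d y x) ∧
      (∀ x y z : ℝ, d x z ≤ d x y + d y z) ∧
      Function.Surjective ⇑f ∧
      (∀ u v : ℝ, d (f u) (f v) ≤ ‖u - v‖) ∧
      ¬ ∃ n : ℝ → ℝ,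
        (∀ x : ℝ, n x = 0 ↔ x = 0) ∧
        (∀ a x : ℝ, n (a • x) = |a| * n x) ∧
        (∀ x y : ℝ, n (x + y) ≤ n x + n y) ∧
        (∀ x y : ℝ, d x y = n (x - y)) := by
  refine ⟨LinearMap.id, fun x y => |Real.tanh x - Real.tanh y|, fun _ _ => rfl,
    fun x y => by rw [abs_eq_zero, sub_eq_zero, Real.tanh_injective.eq_iff],
    fun _ _ => abs_sub_comm _ _, fun _ _ _ => abs_sub_le _ _ _, Function.surjective_id,
    fun u v => Real.lipschitzWith_one_tanh.dist_le_mul u v |>.trans_eq (one_mul _), ?_⟩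
  rintro ⟨n, -, hsmul, -, hd⟩
  have hn : ∀ x, n x = |Real.tanh x| := fun x => by
    simpa only [sub_zero, Real.tanh_zero] using (hd x 0).symm
  have hbdd : BddAbove (range n) :=
    ⟨1, forall_mem_range.2 fun x => (hn x).trans_le (Real.abs_tanh_lt_one x).le⟩
  have htanh_one : 0 < |Real.tanh 1| :=
    abs_pos.2 fun h => one_ne_zero (Real.tanh_injective (h.trans Real.tanh_zero.symm))
  linarith [hn 1, nonpos_of_bddAbove_of_abs_smul hsmul hbdd 1]
end
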